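/- Let φ be a continuous linear functional on the bidual Lip_0(M)* (i.e. φ ∈ F(M)**). Then Σ_{n∈ℤ} ‖φ ∘ W_{Λ_n}‖ ≤ 45‖φ‖, where W_{Λ_n} is the operator of pointwise multiplication by Λ_n on Lip_0(M). -/

import Mathlib

/-! Within one parity class of `n` the tents `Λ_n` have pairwise disjoint supports, because
`Λ_n(x) ≠ 0` forces `2^(n-1) < d(x,0) < 2^(n+1)`. For `‖f‖ ≤ 1` the product rule makes
`f Λ_n` `5`-Lipschitz (`|f| ≤ d(·,0) < 2^(n+1)` on the support of `Λ_n` and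
`Lip Λ_n ≤ 2^(1-n)`), and at two points at most two terms of `∑ f_n Λ_n` over a parity
class are nonzero, so this sum has norm at most `10`. Testing `φ` on `∑ W_{Λ_n} f_n` with
each `f_n` almost norming `φ ∘ W_{Λ_n}` bounds the finite sums of `‖φ ∘ W_{Λ_n}‖` over a
parity class by `10 ‖φ‖`, so all finite sums are at most `20 ‖φ‖ ≤ 45 ‖φ‖`. -/

open Filter Metric Topology NNReal


/-- The set of Lipschitz functions `M → ℝ` vanishing at the base point, as a
submodule of `M → ℝ`. -/
def Lip0Sub (M : Type*) [MetricSpace M] (base : M) : Submodule ℝ (M → ℝ) where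
  carrier := {f | (∃ K, LipschitzWith K f) ∧ f base = 0}
  add_mem' := by
    rintro f g ⟨⟨Kf, hf⟩, hf0⟩ ⟨⟨Kg, hg⟩, hg0⟩
    exact ⟨⟨Kf + Kg, hf.add hg⟩, by simp [Pi.add_apply, hf0, hg0]⟩
  zero_mem' := ⟨⟨0, LipschitzWith.const 0⟩, rfl⟩
  smul_mem' := by
    rintro c f ⟨⟨Kf, hf⟩, hf0⟩
    exact ⟨⟨‖c‖₊ * Kf, (lipschitzWith_smul c).comp hf⟩, by simp [Pi.smul_apply, hf0]⟩

/-- The space `Lip₀(M)` of Lipschitz functions vanishing at the base point.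
(A type synonym, so that it carries the Lipschitz-norm topology rather than the
topology of pointwise convergence.) -/
def Lip0 (M : Type*) [MetricSpace M] (base : M) : Type _ := ↥(Lip0Sub M base)

variable {M : Type*} [MetricSpace M] {base : M}

instance : AddCommGroup (Lip0 M base) :=
  inferInstanceAs (AddCommGroup ↥(Lip0Sub M base))

noncomputable instance : Module ℝ (Lip0 M base) :=
  inferInstanceAs (Module ℝ ↥(Lip0Sub M base))

/-- An element of `Lip₀(M)` is a function on `M`. -/
instance : CoeFun (Lip0 M base) (fun _ => M → ℝ) :=
  ⟨fun f => (Subtype.val f : M → ℝ)⟩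

theorem Lip0.prop (f : Lip0 M base) :
    (∃ K, LipschitzWith K (f : M → ℝ)) ∧ (f : M → ℝ) base = 0 :=
  Subtype.prop f

/-- The quantity defining the Lipschitz norm. -/
noncomputable def Lip0.lipNorm (f : Lip0 M base) : ℝ :=
  ⨆ p : M × M, |f p.1 - f p.2| / dist p.1 p.2

theorem Lip0.ratio_le (f : Lip0 M base) {K : ℝ≥0} (hK : LipschitzWith K (f : M → ℝ))
    (p : M × M) : |f p.1 - f p.2| / dist p.1 p.2 ≤ K := by
  rcases eq_or_ne p.1 p.2 with h | h
  · simp [h, K.coe_nonneg]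
  · rw [div_le_iff₀ (dist_pos.2 h)]
    simpa [Real.dist_eq] using hK.dist_le_mul p.1 p.2

theorem Lip0.bddAbove (f : Lip0 M base) :
    BddAbove (Set.range fun p : M × M => |f p.1 - f p.2| / dist p.1 p.2) := by
  obtain ⟨K, hK⟩ := f.prop.1
  exact ⟨K, by rintro r ⟨p, rfl⟩; exact f.ratio_le hK p⟩

theorem Lip0.ratio_le_lipNorm (f : Lip0 M base) (p : M × M) :
    |f p.1 - f p.2| / dist p.1 p.2 ≤ f.lipNorm :=
  le_ciSup f.bddAbove p

theorem Lip0.lipNorm_nonneg (f : Lip0 M base) : 0 ≤ f.lipNorm := by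
  have := f.ratio_le_lipNorm (base, base)
  simpa using this

/-- The Lipschitz norm on `Lip₀(M)`: the best Lipschitz constant,
`‖f‖ = sup_{x ≠ y} |f x - f y| / d(x,y)`. -/
noncomputable instance Lip0.normedAddCommGroup :
    NormedAddCommGroup (Lip0 M base) :=
  AddGroupNorm.toNormedAddCommGroup
    { toFun := fun f => f.lipNorm
      map_zero' := by
        have h : ∀ p : M × M,
            |(0 : Lip0 M base) p.1 - (0 : Lip0 M base) p.2| / dist p.1 p.2 = 0 := by
          intro p
          show |(0:ℝ) - 0| / _ = 0
          simp
        haveI : Nonempty (M × M) := ⟨(base, base)⟩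
        simp only [Lip0.lipNorm, h, ciSup_const]
      add_le' := by
        intro f g
        haveI : Nonempty (M × M) := ⟨(base, base)⟩
        apply ciSup_le
        intro p
        rcases eq_or_ne p.1 p.2 with h | h
        · have : dist p.1 p.2 = 0 := by simp [h]
          rw [this, div_zero]
          exact add_nonneg f.lipNorm_nonneg g.lipNorm_nonneg
        · have hd : (0:ℝ) < dist p.1 p.2 := dist_pos.2 h
          have h1 : |(f + g) p.1 - (f + g) p.2| ≤ |f p.1 - f p.2| + |g p.1 - g p.2| := by
            show |(f p.1 + g p.1) - (f p.2 + g p.2)| ≤ _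
            rw [add_sub_add_comm]
            exact abs_add_le _ _
          calc |(f + g) p.1 - (f + g) p.2| / dist p.1 p.2
              ≤ (|f p.1 - f p.2| + |g p.1 - g p.2|) / dist p.1 p.2 := by gcongr
            _ ≤ f.lipNorm + g.lipNorm := by
                rw [add_div]
                exact add_le_add (f.ratio_le_lipNorm p) (g.ratio_le_lipNorm p)
      neg' := by
        intro f
        show Lip0.lipNorm _ = Lip0.lipNorm _
        unfold Lip0.lipNorm
        congr 1
        funext p
        show |(- f p.1) - (- f p.2)| / _ = _
        rw [neg_sub_neg, abs_sub_comm]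
      eq_zero_of_map_eq_zero' := by
        intro f hf
        have hconst : ∀ x y : M, f x = f y := by
          intro x y
          rcases eq_or_ne x y with h | h
          · rw [h]
          · have h1 : |f x - f y| / dist x y ≤ 0 := hf ▸ f.ratio_le_lipNorm (x, y)
            have h2 : (0:ℝ) ≤ |f x - f y| / dist x y :=
              div_nonneg (abs_nonneg _) dist_nonneg
            rcases div_eq_zero_iff.1 (le_antisymm h1 h2) with h3 | h3
            · exact sub_eq_zero.1 (abs_eq_zero.1 h3)
            · exact absurd h3 (dist_ne_zero.2 h)
        have hzero : ∀ x, f x = 0 := fun x => (hconst x base).trans f.prop.2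
        exact Subtype.ext (funext hzero) }

noncomputable instance Lip0.normedSpace : NormedSpace ℝ (Lip0 M base) :=
  { norm_smul_le := by
      intro c f
      haveI : Nonempty (M × M) := ⟨(base, base)⟩
      apply ciSup_le
      intro p
      have heq : |(c • f) p.1 - (c • f) p.2| / dist p.1 p.2
          = |c| * (|f p.1 - f p.2| / dist p.1 p.2) := by
        show |c * f p.1 - c * f p.2| / dist p.1 p.2 = _
        rw [← mul_sub, abs_mul, mul_div_assoc]
      rw [heq]
      calc |c| * (|f p.1 - f p.2| / dist p.1 p.2)
          ≤ |c| * f.lipNorm :=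
            mul_le_mul_of_nonneg_left (f.ratio_le_lipNorm p) (abs_nonneg c)
        _ = ‖c‖ * ‖f‖ := rfl }

/-- Evaluation functional `δ(x) ∈ Lip₀(M)*`. -/
noncomputable def deltaF (base : M) (x : M) : StrongDual ℝ (Lip0 M base) :=
  LinearMap.mkContinuous
    { toFun := fun f => f x
      map_add' := fun _ _ => rfl
      map_smul' := fun _ _ => rfl }
    (dist x base)
    (by
      intro f
      show |f x| ≤ dist x base * ‖f‖
      rcases eq_or_ne x base with h | h
      · simp [h, f.prop.2, mul_nonneg dist_nonneg f.lipNorm_nonneg]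
      · have h1 : |f x - f base| / dist x base ≤ ‖f‖ := f.ratio_le_lipNorm (x, base)
        have h2 : |f x - f base| ≤ dist x base * ‖f‖ := by
          rw [div_le_iff₀ (dist_pos.2 (by simpa using h))] at h1
          linarith [h1]
        simpa [f.prop.2] using h2)

/-- The Lipschitz-free space `F(M)`, realized as the closed linear span of the
evaluation functionals inside `Lip₀(M)*`. -/
noncomputable def FreeSpace (base : M) : Set (StrongDual ℝ (Lip0 M base)) :=
  closure ((Submodule.span ℝ (Set.range (deltaF base)) :
    Submodule ℝ (StrongDual ℝ (Lip0 M base))) : Set (StrongDual ℝ (Lip0 M base)))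

/-- A functional `φ ∈ Lip₀(M)* = F(M)**` is *normal* if for every norm-bounded net
converging pointwise and monotonically to `f ∈ Lip₀(M)`, the values `φ(fᵢ)` converge
to `φ(f)`. -/
def IsNormal (base : M) (φ : StrongDual ℝ (Lip0 M base)) : Prop :=
  ∀ (ι : Type) [Preorder ι] [Nonempty ι] [IsDirected ι (· ≤ ·)]
    (F : ι → Lip0 M base) (f : Lip0 M base) (C : ℝ),
    (∀ i, ‖F i‖ ≤ C) →
    ((∀ x, Monotone fun i => (F i) x) ∨ (∀ x, Antitone fun i => (F i) x)) →
    (∀ x, Tendsto (fun i => (F i) x) atTop (𝓝 (f x))) →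
    Tendsto (fun i => φ (F i)) atTop (𝓝 (φ f))



variable {M : Type*} [MetricSpace M]

/-- The "tent" function `Λ_n`, supported on the annulus `2^(n-1) < d(x,0) < 2^(n+1)`,
equal to `1` on the sphere `d(x,0) = 2^n` and affine in `d(x,0)` in between. -/
noncomputable def Lam (base : M) (n : ℤ) (x : M) : ℝ :=
  max 0 (min ((2:ℝ) ^ (1 - n) * dist x base - 1) (2 - (2:ℝ) ^ (-n) * dist x base))

/-- The "plateau" function `Π_n`, equal to `1` on the annulus `2^(-n) ≤ d(x,0) ≤ 2^n`,
vanishing for `d(x,0) ≤ 2^(-(n+1))` and `d(x,0) ≥ 2^(n+1)`, affine in between. -/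
noncomputable def Pla (base : M) (n : ℕ) (x : M) : ℝ :=
  max 0 (min 1 (min ((2:ℝ) ^ ((n:ℤ) + 1) * dist x base - 1)
    (2 - (2:ℝ) ^ (-(n:ℤ)) * dist x base)))

/-- The cutoff function `h_n`, equal to `1` on the ball `d(x,0) ≤ 2^n`, vanishing for
`d(x,0) ≥ 2^(n+1)`, and affine in `d(x,0)` in between. -/
noncomputable def hfun (base : M) (n : ℤ) (x : M) : ℝ :=
  max 0 (min 1 (2 - (2:ℝ) ^ (-n) * dist x base))

theorem Finset.card_filter_ne_zero_le_one {X ι R : Type*} [Zero R] [DecidableEq R] {A : Finset ι}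
    {g : ι → X → R} (hA : (A : Set ι).PairwiseDisjoint fun n => Function.support (g n))
    (z : X) : (A.filter fun n => g n z ≠ 0).card ≤ 1 := by
  refine Finset.card_le_one.mpr fun n hn m hm => ?_
  rw [Finset.mem_filter] at hn hm
  by_contra hnm
  exact Set.disjoint_left.mp (hA hn.1 hm.1 hnm) hn.2 hm.2

section GeneralEstimates

variable {X : Type*} [PseudoMetricSpace X]

theorem abs_mul_sub_mul_le {f g : X → ℝ} {a K L : ℝ} (ha : 0 ≤ a)
    (hf : ∀ z, g z ≠ 0 → |f z| ≤ a) (hfL : ∀ x y, |f x - f y| ≤ L * dist x y)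
    (hgK : ∀ x y, |g x - g y| ≤ K * dist x y) (hg : ∀ z, |g z| ≤ 1) (x y : X) :
    |f x * g x - f y * g y| ≤ (a * K + L) * dist x y := by
  have of_ne_zero : ∀ x y, g x ≠ 0 → |f x * g x - f y * g y| ≤ (a * K + L) * dist x y := by
    intro x y hx
    calc |f x * g x - f y * g y| = |f x * (g x - g y) + (f x - f y) * g y| := by ring_nf
      _ ≤ |f x| * |g x - g y| + |f x - f y| * |g y| := by
          rw [← abs_mul, ← abs_mul]; exact abs_add_le _ _
      _ ≤ a * (K * dist x y) + L * dist x y * 1 :=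
          add_le_add (mul_le_mul (hf x hx) (hgK x y) (abs_nonneg _) ha)
            (mul_le_mul (hfL x y) (hg y) (abs_nonneg _) ((abs_nonneg _).trans (hfL x y)))
      _ = (a * K + L) * dist x y := by ring
  by_cases hx : g x ≠ 0
  · exact of_ne_zero x y hx
  by_cases hy : g y ≠ 0
  · rw [abs_sub_comm, dist_comm]
    exact of_ne_zero y x hy
  push Not at hx hy
  have hK : 0 ≤ K * dist x y := (abs_nonneg _).trans (hgK x y)
  have hL : 0 ≤ L * dist x y := (abs_nonneg _).trans (hfL x y)
  simp only [hx, hy, mul_zero, sub_self, abs_zero]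
  rw [add_mul, mul_assoc]
  exact add_nonneg (mul_nonneg ha hK) hL

theorem abs_sum_sub_sum_le {ι : Type*} (A : Finset ι) {g : ι → X → ℝ} {C : ℝ}
    (hC : 0 ≤ C) (hA : (A : Set ι).PairwiseDisjoint fun n => Function.support (g n))
    (hg : ∀ n ∈ A, ∀ x y, |g n x - g n y| ≤ C * dist x y) (x y : X) :
    |∑ n ∈ A, g n x - ∑ n ∈ A, g n y| ≤ 2 * C * dist x y := by
  classical
  set S := (A.filter fun n => g n x ≠ 0) ∪ (A.filter fun n => g n y ≠ 0)
  have hS : S ⊆ A := Finset.union_subset (Finset.filter_subset _ _) (Finset.filter_subset _ _)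
  have hcard : (S.card : ℝ) ≤ 2 := by
    have := (Finset.card_union_le _ _).trans
      (add_le_add (A.card_filter_ne_zero_le_one hA x) (A.card_filter_ne_zero_le_one hA y))
    exact_mod_cast this
  have hoff : ∀ n ∈ A, n ∉ S → |g n x - g n y| = 0 := by
    intro n hn hnS
    simp only [S, Finset.mem_union, Finset.mem_filter, not_or, not_and, not_not] at hnS
    simp [hnS.1 hn, hnS.2 hn]
  calc |∑ n ∈ A, g n x - ∑ n ∈ A, g n y| ≤ ∑ n ∈ A, |g n x - g n y| := by
        rw [← Finset.sum_sub_distrib]; exact Finset.abs_sum_le_sum_abs _ _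
    _ = ∑ n ∈ S, |g n x - g n y| := (Finset.sum_subset hS hoff).symm
    _ ≤ S.card • (C * dist x y) := Finset.sum_le_card_nsmul _ _ _ fun n hn => hg n (hS hn) x y
    _ ≤ 2 * C * dist x y := by
        rw [nsmul_eq_mul, mul_assoc]
        exact mul_le_mul_of_nonneg_right hcard (by positivity)

theorem StrongDual.sum_norm_le_of_sum_apply_le {E ι : Type*} [NormedAddCommGroup E]
    [NormedSpace ℝ E] (A : Finset ι) (ψ : ι → StrongDual ℝ E) {C : ℝ}
    (h : ∀ f : ι → E, (∀ n, ‖f n‖ ≤ 1) → ∑ n ∈ A, ψ n (f n) ≤ C) :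
    ∑ n ∈ A, ‖ψ n‖ ≤ C := by
  refine le_of_forall_pos_lt_add fun ε hε => ?_
  set δ := ε / (A.card + 1)
  have hδ : 0 < δ := by positivity
  have norming : ∀ n, ∃ f : E, ‖f‖ ≤ 1 ∧ ‖ψ n‖ - δ < ψ n f := by
    intro n
    obtain ⟨f, hf, hψf⟩ := (ψ n).exists_lt_apply_of_lt_opNorm (sub_lt_self _ hδ)
    rcases abs_cases (ψ n f) with ⟨hpos, -⟩ | ⟨hneg, -⟩
    · exact ⟨f, hf.le, by rwa [Real.norm_eq_abs, hpos] at hψf⟩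
    · exact ⟨-f, (norm_neg f).trans_le hf.le, by rwa [map_neg, ← hneg, ← Real.norm_eq_abs]⟩
  choose f hf hψf using norming
  have hcard : A.card * δ < ε := by
    rw [mul_div_assoc', div_lt_iff₀ (by positivity)]
    nlinarith
  calc ∑ n ∈ A, ‖ψ n‖ ≤ ∑ n ∈ A, (ψ n (f n) + δ) :=
        Finset.sum_le_sum fun n _ => by linarith [hψf n]
    _ = ∑ n ∈ A, ψ n (f n) + A.card * δ := by
        rw [Finset.sum_add_distrib, Finset.sum_const, nsmul_eq_mul]
    _ < C + ε := by linarith [h f hf]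

end GeneralEstimates

theorem two_zpow_one_sub (n : ℤ) : (2 : ℝ) ^ (1 - n) = 2 * 2 ^ (-n) := by
  rw [sub_eq_add_neg, zpow_add₀ two_ne_zero, zpow_one]

section Tent

variable {M : Type*} [MetricSpace M] {base : M}

theorem Lip0.abs_sub_le (f : Lip0 M base) (x y : M) : |f x - f y| ≤ ‖f‖ * dist x y := by
  rcases eq_or_ne x y with rfl | h
  · simp
  · exact (div_le_iff₀ (dist_pos.2 h)).mp (f.ratio_le_lipNorm (x, y))

theorem Lip0.abs_le (f : Lip0 M base) (x : M) : |f x| ≤ ‖f‖ * dist x base := by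
  simpa [f.prop.2] using f.abs_sub_le x base

theorem Lip0.norm_le_of_abs_sub_le {f : Lip0 M base} {C : ℝ} (hC : 0 ≤ C)
    (h : ∀ x y, |f x - f y| ≤ C * dist x y) : ‖f‖ ≤ C := by
  have : Nonempty (M × M) := ⟨(base, base)⟩
  refine ciSup_le fun p => ?_
  rcases eq_or_ne p.1 p.2 with hp | hp
  · simpa [hp] using hC
  · exact (div_le_iff₀ (dist_pos.2 hp)).mpr (h p.1 p.2)

theorem Lip0.coe_sum {ι : Type*} (A : Finset ι) (g : ι → Lip0 M base) :
    ((∑ n ∈ A, g n : Lip0 M base) : M → ℝ) = ∑ n ∈ A, (g n : M → ℝ) :=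
  Submodule.coe_sum (Lip0Sub M base) g A

theorem Lam_nonneg (n : ℤ) (x : M) : 0 ≤ Lam base n x := le_max_left _ _

theorem Lam_le_one (n : ℤ) (x : M) : Lam base n x ≤ 1 := by
  refine max_le zero_le_one ?_
  rw [two_zpow_one_sub]
  rcases le_total ((2 : ℝ) ^ (-n) * dist x base) 1 with h | h
  · exact (min_le_left _ _).trans (by linarith)
  · exact (min_le_right _ _).trans (by linarith)

theorem abs_Lam_sub_le (n : ℤ) (x y : M) :
    |Lam base n x - Lam base n y| ≤ 2 ^ (1 - n) * dist x y := by
  have hc : (0 : ℝ) < 2 ^ (-n) := by positivity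
  have hrs : |dist x base - dist y base| ≤ dist x y := abs_dist_sub_le x y base
  unfold Lam
  rw [two_zpow_one_sub]
  refine (abs_max_sub_max_le_max _ _ _ _).trans (max_le (by simp; positivity) ?_)
  refine (abs_min_sub_min_le_max _ _ _ _).trans (max_le ?_ ?_)
  · rw [show 2 * 2 ^ (-n) * dist x base - 1 - (2 * 2 ^ (-n) * dist y base - 1)
        = 2 * 2 ^ (-n) * (dist x base - dist y base) by ring, abs_mul, abs_of_pos (by positivity)]
    gcongr
  · rw [show 2 - 2 ^ (-n) * dist x base - (2 - 2 ^ (-n) * dist y base)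
        = 2 ^ (-n) * (dist y base - dist x base) by ring, abs_mul, abs_of_pos hc, abs_sub_comm]
    nlinarith [abs_nonneg (dist x base - dist y base)]

theorem dist_lt_of_Lam_ne_zero {n : ℤ} {x : M} (hx : Lam base n x ≠ 0) :
    2 ^ (n - 1) < dist x base ∧ dist x base < 2 ^ (n + 1) := by
  have hpos : 0 < min (2 ^ (1 - n) * dist x base - 1) (2 - 2 ^ (-n) * dist x base) := by
    by_contra! h
    exact hx (max_eq_left h)
  obtain ⟨h1, h2⟩ := lt_min_iff.mp hpos
  have hinv : ∀ k : ℤ, (2 : ℝ) ^ k * 2 ^ (-k) = 1 := fun k => by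
    rw [← zpow_add₀ two_ne_zero, add_neg_cancel, zpow_zero]
  constructor
  · calc (2 : ℝ) ^ (n - 1) = 2 ^ (n - 1) * 1 := (mul_one _).symm
      _ < 2 ^ (n - 1) * (2 ^ (1 - n) * dist x base) := by gcongr; linarith
      _ = dist x base := by
          rw [← mul_assoc, show 1 - n = -(n - 1) by ring, hinv, one_mul]
  · calc dist x base = 2 ^ n * (2 ^ (-n) * dist x base) := by rw [← mul_assoc, hinv, one_mul]
      _ < 2 ^ n * 2 := by gcongr; linarith
      _ = 2 ^ (n + 1) := (zpow_add_one₀ two_ne_zero n).symm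

theorem disjoint_support_Lam {n m : ℤ} (hnm : n ≠ m) (h : Even (n - m)) :
    Disjoint (Function.support (Lam base n)) (Function.support (Lam base m)) := by
  refine Set.disjoint_left.mpr fun x hn hm => hnm ?_
  obtain ⟨hn1, hn2⟩ := dist_lt_of_Lam_ne_zero hn
  obtain ⟨hm1, hm2⟩ := dist_lt_of_Lam_ne_zero hm
  have k1 : n - 1 < m + 1 := (zpow_lt_zpow_iff_right₀ one_lt_two).mp (hn1.trans hm2)
  have k2 : m - 1 < n + 1 := (zpow_lt_zpow_iff_right₀ one_lt_two).mp (hm1.trans hn2)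
  obtain ⟨t, ht⟩ := h
  omega

theorem pairwiseDisjoint_support_Lam {A : Set ℤ}
    (hA : ∀ n ∈ A, ∀ m ∈ A, (Even n ↔ Even m)) :
    A.PairwiseDisjoint fun n => Function.support (Lam base n) :=
  fun n hn m hm hnm => disjoint_support_Lam hnm (Int.even_sub.mpr (hA n hn m hm))

theorem Lip0.abs_mul_Lam_sub_le {f : Lip0 M base} (hf : ‖f‖ ≤ 1) (n : ℤ) (x y : M) :
    |f x * Lam base n x - f y * Lam base n y| ≤ 5 * dist x y := by
  have h := abs_mul_sub_mul_le (a := 2 ^ (n + 1)) (by positivity)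
    (fun z hz => (f.abs_le z).trans
      ((mul_le_of_le_one_left dist_nonneg hf).trans (dist_lt_of_Lam_ne_zero hz).2.le))
    (fun x y => (f.abs_sub_le x y).trans (mul_le_mul_of_nonneg_right hf dist_nonneg))
    (abs_Lam_sub_le n) (fun z => (abs_of_nonneg (Lam_nonneg n z)).trans_le (Lam_le_one n z)) x y
  have h5 : (2 : ℝ) ^ (n + 1) * 2 ^ (1 - n) + 1 = 5 := by
    rw [← zpow_add₀ two_ne_zero, show n + 1 + (1 - n) = 2 by ring]
    norm_num
  rwa [h5] at h

theorem Lip0.norm_sum_mul_Lam_le {A : Finset ℤ}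
    (hA : (A : Set ℤ).PairwiseDisjoint fun n => Function.support (Lam base n))
    {f g : ℤ → Lip0 M base} (hf : ∀ n, ‖f n‖ ≤ 1)
    (hg : ∀ n x, g n x = f n x * Lam base n x) : ‖∑ n ∈ A, g n‖ ≤ 10 := by
  refine Lip0.norm_le_of_abs_sub_le (by norm_num) fun x y => ?_
  simp only [Lip0.coe_sum, Finset.sum_apply, hg]
  have h := abs_sum_sub_sum_le A (by norm_num : (0 : ℝ) ≤ 5)
    (hA.mono fun n => Function.support_mul_subset_right (f n) _)
    (fun n _ => (f n).abs_mul_Lam_sub_le (hf n) n) x y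
  linarith

theorem sum_norm_comp_mul_Lam_le (φ : StrongDual ℝ (Lip0 M base))
    {W : ℤ → (Lip0 M base →L[ℝ] Lip0 M base)}
    (hW : ∀ (n : ℤ) (f : Lip0 M base) (x : M), (W n f) x = f x * Lam base n x) (A : Finset ℤ)
    (hA : (A : Set ℤ).PairwiseDisjoint fun n => Function.support (Lam base n)) :
    ∑ n ∈ A, ‖φ.comp (W n)‖ ≤ 10 * ‖φ‖ := by
  refine StrongDual.sum_norm_le_of_sum_apply_le A _ fun f hf => ?_
  calc ∑ n ∈ A, φ.comp (W n) (f n) = φ (∑ n ∈ A, W n (f n)) := by simp [map_sum]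
    _ ≤ ‖φ‖ * ‖∑ n ∈ A, W n (f n)‖ := (le_abs_self _).trans (φ.le_opNorm _)
    _ ≤ ‖φ‖ * 10 := by gcongr; exact Lip0.norm_sum_mul_Lam_le hA hf fun n => hW n (f n)
    _ = 10 * ‖φ‖ := mul_comm _ _

end Tent

theorem kalton_decomposition_bound_general (base : M)
    (φ : StrongDual ℝ (Lip0 M base))
    (W : ℤ → (Lip0 M base →L[ℝ] Lip0 M base))
    (hW : ∀ (n : ℤ) (f : Lip0 M base) (x : M), (W n f) x = f x * Lam base n x) :
    Summable (fun n : ℤ => ‖φ.comp (W n)‖) ∧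
      ∑' n : ℤ, ‖φ.comp (W n)‖ ≤ 45 * ‖φ‖ := by
  have bound : ∀ S : Finset ℤ, ∑ n ∈ S, ‖φ.comp (W n)‖ ≤ 20 * ‖φ‖ := by
    intro S
    rw [← Finset.sum_filter_add_sum_filter_not S Even]
    have hEven := sum_norm_comp_mul_Lam_le φ hW (S.filter Even)
      (pairwiseDisjoint_support_Lam fun n hn m hm =>
        iff_of_true (Finset.mem_filter.mp hn).2 (Finset.mem_filter.mp hm).2)
    have hOdd := sum_norm_comp_mul_Lam_le φ hW (S.filter (¬Even ·))
      (pairwiseDisjoint_support_Lam fun n hn m hm =>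
        iff_of_false (Finset.mem_filter.mp hn).2 (Finset.mem_filter.mp hm).2)
    linarith
  have hs : Summable fun n : ℤ => ‖φ.comp (W n)‖ :=
    summable_of_sum_le (fun n => norm_nonneg _) bound
  exact ⟨hs, (hs.tsum_le_of_sum_le bound).trans (by linarith [norm_nonneg φ])⟩

/-- for `φ ∈ F(M)** = Lip₀(M)*` and `W_{Λ_n}` the multiplication
operator by the tent function `Λ_n`, one has `Σ_{n∈ℤ} ‖φ ∘ W_{Λ_n}‖ ≤ 45‖φ‖`. -/
theorem kalton_decomposition_bound [CompleteSpace M] (base : M)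
    (φ : StrongDual ℝ (Lip0 M base))
    (W : ℤ → (Lip0 M base →L[ℝ] Lip0 M base))
    (hW : ∀ (n : ℤ) (f : Lip0 M base) (x : M), (W n f) x = f x * Lam base n x) :
    Summable (fun n : ℤ => ‖φ.comp (W n)‖) ∧
      ∑' n : ℤ, ‖φ.comp (W n)‖ ≤ 45 * ‖φ‖ :=
  kalton_decomposition_bound_general base φ W hW
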